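/- arXiv:0907.2577 — 3 statements merged into one kernel-verified Lean document; each statement's English description precedes it below -/
import Mathlib

section
/- For any prime p, any non-negative integers m and s, any positive integers N_1, N_2, …, N_k, and any integer L with 1 ≤ L ≤ max(N_1,…,N_k), the p-adic valuation of 𝐁_𝐍(m)·(H_{Lmp^s} − H_{L⌊m/p⌋p^{s+1}}) is at least −s, i.e., 𝐁_𝐍(m)·(H_{Lmp^s} − H_{L⌊m/p⌋p^{s+1}}) ∈ (1/p^s)·ℤ_p. -/
open Finset

/-- The `n`-th harmonic number `H_n = 1 + 1/2 + ⋯ + 1/n`, as a rational (`H_0 = 0`). -/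
def harm (n : ℕ) : ℚ := ∑ i ∈ Finset.range n, (1 : ℚ) / (i + 1)

/-- Subsets of the set of distinct prime factors of `N` having even cardinality. -/
def evenSub (N : ℕ) : Finset (Finset ℕ) :=
  N.primeFactors.powerset.filter fun J => Even J.card

/-- Subsets of the set of distinct prime factors of `N` having odd cardinality. -/
def oddSub (N : ℕ) : Finset (Finset ℕ) :=
  N.primeFactors.powerset.filter fun J => Odd J.card

/-- `∏_{j=1}^μ (α_j m)!`, where the `α_j` are the quotients of `N` by products of evenly
many distinct prime factors of `N`. -/
def Bnum (N m : ℕ) : ℕ :=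
  ∏ J ∈ evenSub N, Nat.factorial ((N / ∏ p ∈ J, p) * m)

/-- `∏_{j=1}^η (β_j m)!`, where the `β_j` are the quotients of `N` by products of oddly
many distinct prime factors of `N`, padded with `φ(N)` entries equal to `1` (so that
`Σ α_j = Σ β_j`). -/
def Bden (N m : ℕ) : ℕ :=
  (∏ J ∈ oddSub N, Nat.factorial ((N / ∏ p ∈ J, p) * m)) * (Nat.factorial m) ^ N.totient

/-- `𝐁_N(m) = (∏ (α_j m)!)/(∏ (β_j m)!)`. -/
noncomputable def BB (N m : ℕ) : ℚ := (Bnum N m : ℚ) / (Bden N m : ℚ)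

/-- `𝐁_𝐍(m) = ∏_{j=1}^k 𝐁_{N_j}(m)` for a vector `𝐍 = (N_1, …, N_k)`. -/
noncomputable def BBvec {k : ℕ} (N : Fin k → ℕ) (m : ℕ) : ℚ := ∏ i, BB (N i) m

/-!
By Legendre's formula and inclusion–exclusion over the prime factors of `N`,
`v_p(𝐁_N(m)) = Σ_{r ≥ 1} c_N(⌊N (m mod p^r) / p^r⌋)`, where `c_N(M)` counts the integers in
`(0, M]` coprime to `N`. Hence every `𝐁_N(m)` is `p`-integral, and `v_p(𝐁_N(m)) ≥ t` as soon as
`p^r ≤ N (m mod p^r)` for `1 ≤ r ≤ t`. The harmonic difference is `Σ 1/n` over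
`L⌊m/p⌋p^{s+1} < n ≤ Lmp^s`, and for such `n` with `v_p(n) = s + t` this condition holds for
any `N_i ≥ L`. So each term of the sum has valuation `≥ -s`, and so does the sum.
-/

open scoped Nat

def coprimeCount (N M : ℕ) : ℕ := #{a ∈ Ioc 0 M | N.Coprime a}

lemma coprimeCount_add_self (N M : ℕ) : coprimeCount N (M + N) = coprimeCount N M + φ N := by
  have hsplit : Ioc 0 (M + N) = Ioc 0 M ∪ Ico (M + 1) (M + 1 + N) := by
    ext; simp only [mem_union, mem_Ioc, mem_Ico]; omega
  have hdisj : Disjoint (Ioc 0 M) (Ico (M + 1) (M + 1 + N)) :=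
    disjoint_left.2 fun x hx hx' => by simp only [mem_Ioc, mem_Ico] at hx hx'; omega
  rw [coprimeCount, hsplit, filter_union, card_union_of_disjoint (disjoint_filter_filter hdisj),
    Nat.filter_coprime_Ico_eq_totient, coprimeCount]

lemma coprimeCount_mul_add (N a M : ℕ) :
    coprimeCount N (N * a + M) = a * φ N + coprimeCount N M := by
  induction a with
  | zero => simp
  | succ a ih => rw [mul_add_one, add_right_comm, coprimeCount_add_self, ih]; ring

lemma coprimeCount_pos (N : ℕ) {M : ℕ} (hM : 0 < M) : 0 < coprimeCount N M :=
  card_pos.2 ⟨1, mem_filter.2 ⟨mem_Ioc.2 ⟨Nat.one_pos, hM⟩, Nat.coprime_one_right N⟩⟩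

lemma prod_dvd_iff_subset_filter_dvd {N a : ℕ} {J : Finset ℕ} (hJ : J ⊆ N.primeFactors) :
    (∏ q ∈ J, q) ∣ a ↔ J ⊆ {q ∈ N.primeFactors | q ∣ a} :=
  ⟨fun h _ hq => mem_filter.2 ⟨hJ hq, (dvd_prod_of_mem _ hq).trans h⟩, fun h =>
    prod_primes_dvd a (fun _ hq => (Nat.prime_of_mem_primeFactors (hJ hq)).prime)
      fun _ hq => (mem_filter.1 (h hq)).2⟩

lemma filter_primeFactors_dvd_eq_empty_iff {N : ℕ} (hN : N ≠ 0) (a : ℕ) :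
    {q ∈ N.primeFactors | q ∣ a} = ∅ ↔ N.Coprime a := by
  rw [filter_eq_empty_iff]
  refine ⟨fun h => Nat.coprime_of_dvd fun q hq hqN => h (Nat.mem_primeFactors.2 ⟨hq, hqN, hN⟩),
    fun h q hq hqa => ?_⟩
  exact (Nat.prime_of_mem_primeFactors hq).one_lt.ne'
    (Nat.eq_one_of_dvd_coprimes h (Nat.dvd_of_mem_primeFactors hq) hqa)

lemma sum_powerset_primeFactors_ite_dvd {N : ℕ} (hN : N ≠ 0) (a : ℕ) :
    ∑ J ∈ N.primeFactors.powerset, (if (∏ q ∈ J, q) ∣ a then (-1 : ℤ) ^ #J else 0)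
      = if N.Coprime a then 1 else 0 := by
  have hdvd : {J ∈ N.primeFactors.powerset | (∏ q ∈ J, q) ∣ a}
      = {q ∈ N.primeFactors | q ∣ a}.powerset := by
    ext J
    simp only [mem_filter, mem_powerset]
    exact ⟨fun h => (prod_dvd_iff_subset_filter_dvd h.1).1 h.2,
      fun h => ⟨h.trans (filter_subset _ _), (prod_dvd_iff_subset_filter_dvd
        (h.trans (filter_subset _ _))).2 h⟩⟩
  rw [← sum_filter, hdvd, sum_powerset_neg_one_pow_card,
    if_congr (filter_primeFactors_dvd_eq_empty_iff hN a) rfl rfl]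

lemma sum_powerset_primeFactors_neg_one_pow_mul_div {N : ℕ} (hN : N ≠ 0) (M : ℕ) :
    ∑ J ∈ N.primeFactors.powerset, (-1 : ℤ) ^ #J * (M / ∏ q ∈ J, q : ℕ)
      = coprimeCount N M := by
  simp_rw [← Nat.Ioc_filter_dvd_card_eq_div, card_filter, Nat.cast_sum, mul_sum, coprimeCount,
    card_filter, Nat.cast_sum]
  rw [sum_comm]
  refine sum_congr rfl fun a _ => ?_
  simp only [Nat.cast_ite, Nat.cast_one, Nat.cast_zero, mul_ite, mul_one, mul_zero]
  exact sum_powerset_primeFactors_ite_dvd hN a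

lemma sum_evenSub_div {N : ℕ} (hN : N ≠ 0) (M : ℕ) :
    ∑ J ∈ evenSub N, M / ∏ q ∈ J, q = ∑ J ∈ oddSub N, M / ∏ q ∈ J, q + coprimeCount N M := by
  set f : Finset ℕ → ℤ := fun J => (M / ∏ q ∈ J, q : ℕ)
  have hsplit : ∑ J ∈ N.primeFactors.powerset, (-1) ^ #J * f J
      = ∑ J ∈ evenSub N, (-1) ^ #J * f J + ∑ J ∈ oddSub N, (-1) ^ #J * f J := by
    rw [← sum_filter_add_sum_filter_not _ fun J => Even #J]
    simp only [evenSub, oddSub, Nat.not_even_iff_odd]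
  have heven : ∑ J ∈ evenSub N, (-1) ^ #J * f J = ∑ J ∈ evenSub N, f J :=
    sum_congr rfl fun J hJ => by rw [(mem_filter.1 hJ).2.neg_one_pow, one_mul]
  have hodd : ∑ J ∈ oddSub N, (-1) ^ #J * f J = -∑ J ∈ oddSub N, f J := by
    rw [← sum_neg_distrib]
    exact sum_congr rfl fun J hJ => by rw [(mem_filter.1 hJ).2.neg_one_pow, neg_one_mul]
  have h := sum_powerset_primeFactors_neg_one_pow_mul_div hN M
  rw [hsplit, heven, hodd] at h
  have : ∑ J ∈ evenSub N, f J = ∑ J ∈ oddSub N, f J + coprimeCount N M := by linarith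
  simp only [f] at this
  exact_mod_cast this

lemma div_prod_mul_div_eq {N : ℕ} {J : Finset ℕ} (hJ : J ⊆ N.primeFactors) (m d : ℕ) :
    N / (∏ q ∈ J, q) * m / d = N * m / d / ∏ q ∈ J, q := by
  have hdvd : (∏ q ∈ J, q) ∣ N :=
    prod_primes_dvd N (fun _ hq => (Nat.prime_of_mem_primeFactors (hJ hq)).prime)
      fun _ hq => Nat.dvd_of_mem_primeFactors (hJ hq)
  rw [Nat.div_mul_right_comm hdvd, Nat.div_right_comm]

lemma sum_evenSub_mul_div {N : ℕ} (hN : N ≠ 0) (m : ℕ) {d : ℕ} (hd : 0 < d) :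
    ∑ J ∈ evenSub N, N / (∏ q ∈ J, q) * m / d
      = ∑ J ∈ oddSub N, N / (∏ q ∈ J, q) * m / d + φ N * (m / d)
        + coprimeCount N (N * (m % d) / d) := by
  have hquot : ∀ S ⊆ N.primeFactors.powerset,
      ∑ J ∈ S, N / (∏ q ∈ J, q) * m / d = ∑ J ∈ S, N * m / d / ∏ q ∈ J, q :=
    fun S hS => sum_congr rfl fun J hJ => div_prod_mul_div_eq (mem_powerset.1 (hS hJ)) m d
  have hsplit : N * m / d = N * (m / d) + N * (m % d) / d := by
    conv_lhs => rw [← Nat.mod_add_div m d, mul_add, mul_left_comm, Nat.add_mul_div_left _ _ hd]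
    ring
  rw [hquot (evenSub N) (filter_subset _ _), hquot (oddSub N) (filter_subset _ _),
    sum_evenSub_div hN, hsplit, coprimeCount_mul_add]
  ring

section Valuation

variable (p : ℕ) [hp : Fact p.Prime]

lemma padicValNat_finset_prod {ι : Type*} {s : Finset ι} {f : ι → ℕ} (hf : ∀ i ∈ s, f i ≠ 0) :
    padicValNat p (∏ i ∈ s, f i) = ∑ i ∈ s, padicValNat p (f i) := by
  induction s using Finset.cons_induction with
  | empty => simp
  | cons a s _ ih =>
    rw [forall_mem_cons] at hf
    rw [prod_cons, sum_cons, padicValNat.mul hf.1 (prod_ne_zero_iff.2 hf.2), ih hf.2]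

lemma padicValNat_Bnum {N m b : ℕ} (hN : N ≠ 0) (hb : Nat.log p (N * m) < b) :
    padicValNat p (Bnum N m)
      = padicValNat p (Bden N m) + ∑ r ∈ Ico 1 b, coprimeCount N (N * (m % p ^ r) / p ^ r) := by
  have hfac : ∀ x ≤ N * m, padicValNat p x ! = ∑ r ∈ Ico 1 b, x / p ^ r := fun x hx =>
    padicValNat_factorial ((Nat.log_mono_right hx).trans_lt hb)
  have hfac_prod : ∀ S : Finset (Finset ℕ), padicValNat p (∏ J ∈ S, (N / (∏ q ∈ J, q) * m)!)
      = ∑ J ∈ S, ∑ r ∈ Ico 1 b, N / (∏ q ∈ J, q) * m / p ^ r := fun S => by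
    rw [padicValNat_finset_prod p fun _ _ => Nat.factorial_ne_zero _]
    exact sum_congr rfl fun J _ => hfac _ (Nat.mul_le_mul_right m (Nat.div_le_self N _))
  rw [Bnum, Bden, padicValNat.mul (prod_ne_zero_iff.2 fun _ _ => Nat.factorial_ne_zero _)
      (pow_ne_zero _ (Nat.factorial_ne_zero _)), padicValNat.pow, hfac_prod, hfac_prod,
    hfac m (Nat.le_mul_of_pos_left m (Nat.pos_of_ne_zero hN)), sum_comm, sum_comm (s := oddSub N),
    mul_sum, ← sum_add_distrib, ← sum_add_distrib]
  exact sum_congr rfl fun r _ => sum_evenSub_mul_div hN m (pow_pos hp.out.pos r)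

lemma padicValNat_Bden_add_le {N m t : ℕ} (hN : N ≠ 0)
    (hcond : ∀ r ∈ Icc 1 t, p ^ r ≤ N * (m % p ^ r)) :
    padicValNat p (Bden N m) + t ≤ padicValNat p (Bnum N m) := by
  rw [padicValNat_Bnum p hN ((Nat.lt_succ_self _).trans_le (le_max_left _ (t + 1)))]
  gcongr
  calc t = ∑ r ∈ Icc 1 t, 1 := by simp
    _ ≤ ∑ r ∈ Icc 1 t, coprimeCount N (N * (m % p ^ r) / p ^ r) :=
      sum_le_sum fun r hr => coprimeCount_pos N (Nat.div_pos (hcond r hr) (pow_pos hp.out.pos r))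
    _ ≤ _ := sum_le_sum_of_subset fun r hr => by
      simp only [mem_Icc, mem_Ico] at hr ⊢
      omega

end Valuation

lemma pow_le_mul_mod_of_pow_dvd {p L m s r n : ℕ} (hp : 0 < p) (hr : r ≠ 0)
    (hA : L * (m / p) * p ^ (s + 1) < n) (hB : n ≤ L * m * p ^ s) (hdvd : p ^ (s + r) ∣ n) :
    p ^ r ≤ L * (m % p ^ r) := by
  obtain ⟨w, rfl⟩ := hdvd
  have hps : 0 < p ^ s := pow_pos hp s
  have hupper : p ^ r * w ≤ L * m :=
    Nat.le_of_mul_le_mul_right (by rw [pow_add] at hB; linarith) hps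
  have hfloor : m / p ^ r * p ^ r ≤ m / p * p := by
    obtain ⟨r', rfl⟩ := Nat.exists_eq_succ_of_ne_zero hr
    calc m / p ^ (r' + 1) * p ^ (r' + 1) = m / p / p ^ r' * p ^ r' * p := by
          rw [pow_succ', ← Nat.div_div_eq_div_mul]; ring
      _ ≤ m / p * p := Nat.mul_le_mul_right p (Nat.div_mul_le_self _ _)
  have hlower : L * (m / p ^ r) < w := by
    refine Nat.lt_of_mul_lt_mul_right (a := p ^ r * p ^ s) ?_
    calc L * (m / p ^ r) * (p ^ r * p ^ s) = L * (m / p ^ r * p ^ r) * p ^ s := by ring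
      _ ≤ L * (m / p * p) * p ^ s := by gcongr
      _ = L * (m / p) * p ^ (s + 1) := by ring
      _ < p ^ (s + r) * w := hA
      _ = w * (p ^ r * p ^ s) := by ring
  refine Nat.le_of_add_le_add_right (b := p ^ r * (L * (m / p ^ r))) ?_
  calc p ^ r + p ^ r * (L * (m / p ^ r)) = p ^ r * (L * (m / p ^ r) + 1) := by ring
    _ ≤ p ^ r * w := Nat.mul_le_mul_left _ hlower
    _ ≤ L * m := hupper
    _ = L * (m % p ^ r) + p ^ r * (L * (m / p ^ r)) := by
        conv_lhs => rw [← Nat.mod_add_div m (p ^ r)]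
        ring

lemma harm_sub_harm {a b : ℕ} (hab : a ≤ b) :
    harm b - harm a = ∑ n ∈ Ioc a b, (1 : ℚ) / n := by
  induction b, hab using Nat.le_induction with
  | base => simp
  | succ b hab ih =>
    rw [sum_Ioc_succ_top hab, ← ih]
    simp only [harm, sum_range_succ]
    push_cast
    ring

lemma BB_zero_left (m : ℕ) : BB 0 m = 1 := by
  simp [BB, Bnum, Bden, evenSub, oddSub]

section Norm

variable (p : ℕ) [hp : Fact p.Prime]

lemma norm_natCast_eq_zpow {n : ℕ} (hn : n ≠ 0) :
    ‖(n : ℚ_[p])‖ = (p : ℝ) ^ (-(padicValNat p n : ℤ)) := by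
  rw [Padic.norm_eq_zpow_neg_valuation (Nat.cast_ne_zero.2 hn), Padic.valuation_natCast]

lemma norm_BB_le {N m t : ℕ} (hN : N ≠ 0) (hcond : ∀ r ∈ Icc 1 t, p ^ r ≤ N * (m % p ^ r)) :
    ‖(BB N m : ℚ_[p])‖ ≤ (p : ℝ) ^ (-(t : ℤ)) := by
  have hv := padicValNat_Bden_add_le p hN hcond
  have hBnum : Bnum N m ≠ 0 := prod_ne_zero_iff.2 fun _ _ => Nat.factorial_ne_zero _
  have hBden : Bden N m ≠ 0 := mul_ne_zero (prod_ne_zero_iff.2 fun _ _ => Nat.factorial_ne_zero _)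
    (pow_ne_zero _ (Nat.factorial_ne_zero _))
  rw [BB]
  push_cast
  rw [norm_div, norm_natCast_eq_zpow p hBnum, norm_natCast_eq_zpow p hBden,
    ← zpow_sub₀ (Nat.cast_ne_zero.2 hp.out.ne_zero)]
  exact zpow_le_zpow_right₀ (by exact_mod_cast hp.out.one_le) (by omega)

lemma norm_BB_le_one (N m : ℕ) : ‖(BB N m : ℚ_[p])‖ ≤ 1 := by
  rcases eq_or_ne N 0 with rfl | hN
  · simp [BB_zero_left]
  · simpa using norm_BB_le p hN (t := 0) (by simp)

lemma norm_BBvec_le {k : ℕ} {N : Fin k → ℕ} {i : Fin k} (hi : N i ≠ 0) {m t : ℕ}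
    (hcond : ∀ r ∈ Icc 1 t, p ^ r ≤ N i * (m % p ^ r)) :
    ‖(BBvec N m : ℚ_[p])‖ ≤ (p : ℝ) ^ (-(t : ℤ)) := by
  rw [BBvec]
  push_cast
  rw [norm_prod, ← mul_prod_erase _ _ (mem_univ i)]
  exact (mul_le_of_le_one_right (norm_nonneg _)
    (prod_le_one (fun _ _ => norm_nonneg _) fun _ _ => norm_BB_le_one p _ _)).trans
      (norm_BB_le p hi hcond)

lemma norm_BBvec_div_le {k : ℕ} {N : Fin k → ℕ} {L m s n : ℕ} (hL : L ≤ univ.sup N)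
    (hA : L * (m / p) * p ^ (s + 1) < n) (hB : n ≤ L * m * p ^ s) :
    ‖(BBvec N m : ℚ_[p]) / n‖ ≤ (p : ℝ) ^ s := by
  have hn : n ≠ 0 := by omega
  have hL0 : 0 < L := Nat.pos_of_ne_zero fun h => by simp [h] at hB; omega
  obtain ⟨i, -, hi⟩ := (Finset.le_sup_iff hL0).1 hL
  set u := padicValNat p n
  have hcond : ∀ r ∈ Icc 1 (u - s), p ^ r ≤ N i * (m % p ^ r) := fun r hr => by
    rw [mem_Icc] at hr
    have hdvd : p ^ (s + r) ∣ n := (pow_dvd_pow p (by omega)).trans pow_padicValNat_dvd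
    exact (pow_le_mul_mod_of_pow_dvd hp.out.pos (by omega) hA hB hdvd).trans
      (Nat.mul_le_mul_right _ hi)
  calc ‖(BBvec N m : ℚ_[p]) / n‖ ≤ (p : ℝ) ^ (-((u - s : ℕ) : ℤ)) / (p : ℝ) ^ (-(u : ℤ)) := by
        rw [norm_div, norm_natCast_eq_zpow p hn]
        gcongr
        exact norm_BBvec_le p (by omega) hcond
    _ ≤ (p : ℝ) ^ (s : ℤ) := by
        rw [← zpow_sub₀ (Nat.cast_ne_zero.2 hp.out.ne_zero)]
        exact zpow_le_zpow_right₀ (by exact_mod_cast hp.out.one_le) (by omega)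
    _ = (p : ℝ) ^ s := zpow_natCast _ _

end Norm

theorem BBvec_mul_harm_diff_mem_inv_pow_p_zp_general (p : ℕ) [hp : Fact p.Prime] (m s : ℕ)
    {k : ℕ} (N : Fin k → ℕ) (L : ℕ) (hL2 : L ≤ Finset.univ.sup N) :
    ‖((BBvec N m * (harm (L * m * p ^ s) - harm (L * (m / p) * p ^ (s + 1))) : ℚ) : ℚ_[p])‖
      ≤ (p : ℝ) ^ s := by
  have hAB : L * (m / p) * p ^ (s + 1) ≤ L * m * p ^ s := by
    calc L * (m / p) * p ^ (s + 1) = L * (m / p * p) * p ^ s := by ring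
      _ ≤ L * m * p ^ s := by gcongr; exact Nat.div_mul_le_self m p
  rw [harm_sub_harm hAB, mul_sum]
  push_cast
  refine IsUltrametricDist.norm_sum_le_of_forall_le_of_nonneg (by positivity) fun n hn => ?_
  obtain ⟨hA, hB⟩ := mem_Ioc.1 hn
  rw [mul_one_div]
  exact norm_BBvec_div_le p hL2 hA hB

/-- Lemma 3 (Krattenthaler–Rivoal): for a prime `p`, `m, s ≥ 0`, positive integers
`N_1, …, N_k`, and `1 ≤ L ≤ max(N_1, …, N_k)`, one has
`𝐁_𝐍(m)·(H_{Lmp^s} − H_{L⌊m/p⌋p^{s+1}}) ∈ (1/p^s)·ℤ_p`, i.e. its `p`-adic norm is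
at most `p^s`. -/
theorem BBvec_mul_harm_diff_mem_inv_pow_p_zp (p : ℕ) [hp : Fact p.Prime] (m s : ℕ)
    {k : ℕ} (N : Fin k → ℕ) (hN : ∀ i, 0 < N i)
    (L : ℕ) (hL1 : 1 ≤ L) (hL2 : L ≤ Finset.univ.sup N) :
    ‖((BBvec N m * (harm (L * m * p ^ s) - harm (L * (m / p) * p ^ (s + 1))) : ℚ) : ℚ_[p])‖
      ≤ (p : ℝ) ^ s :=
  BBvec_mul_harm_diff_mem_inv_pow_p_zp_general p (hp := hp) m s N L hL2
end

section
/- For any prime p, any non-negative integers a and j with 0 ≤ a < p, any positive integers N_1, N_2, …, N_k, and any integer L with 1 ≤ L ≤ max(N_1,…,N_k), the p-adic valuation of B_𝐍(a+pj)·(H_{Lj+⌊La/p⌋} − H_{Lj}) is at least 1 + v_p(M_𝐍) − v_p(Θ_L), i.e., B_𝐍(a+pj)·(H_{Lj+⌊La/p⌋} − H_{Lj}) ∈ p·(M_𝐍/Θ_L)·ℤ_p. -/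
/-!
Write `m = a + p j`, `g = ⌊L a / p⌋` and `U_N(m) = (N m)! / (m!^N N!)`, the integer
`Nat.uniformBell N m`. For `m ≠ 0` we have `B_N(m) = N! · U_N(m)`, so `B_𝐍(m) = M_𝐍 · ∏ U_{N_i}(m)`,
and `U_L(m) ∣ U_N(m)` for `L ≤ N`. It therefore suffices to show
`U · (H_{Lj+g} − H_{Lj}) ∈ (p / Θ_L) ℤ_p` for every integer `U` divisible by `U_L(m)`.

If `m = 1` this reads `H_{⌊L/p⌋} ∈ (p / Θ_L) ℤ_p`, which follows from `H_L ∈ Θ_L⁻¹ ℤ_p` and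
`p H_L − H_{⌊L/p⌋} = ∑_{i ≤ L, p ∤ i} p / i ∈ p ℤ_p`.

If `m ≥ 2`, every term `U_L(m) / (L j + i)` with `1 ≤ i ≤ g` already lies in `p ℤ_p`. For `j ≥ 1`,
Legendre's formula gives `v_p((L m)!) = L j + g + v_p((L j + g)!)` and `v_p(m!) = j + v_p(j!)`;
since `(L j)! · (L j + i) ∣ (L j + g)!` and `U_L(j)` is an integer,
`v_p(U_L(m)) ≥ g + v_p(L j + i)`.
For `j = 0` we have `v_p(U_L(a)) = v_p((L a)! / L!)` as `a < p`, and `(L, L a]` contains a multiple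
of `p^{v_p(i)+1}`.
-/

open Finset

/-- `B_N(m) = (Nm)!/m!^N`. -/
noncomputable def BQ (N m : ℕ) : ℚ := ((N * m).factorial : ℚ) / ((m.factorial : ℚ)) ^ N

/-- `B_𝐍(m) = ∏_{j=1}^k B_{N_j}(m)` for a vector `𝐍 = (N_1, …, N_k)`. -/
noncomputable def BQvec {k : ℕ} (N : Fin k → ℕ) (m : ℕ) : ℚ := ∏ i, BQ (N i) m

/-- `Θ_L`, the denominator of the harmonic number `H_L` written as a reduced
fraction (equal to `L!/gcd(L!, L!·H_L)`). -/
def Theta (L : ℕ) : ℕ := (harm L).den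

open scoped Nat

namespace Nat

theorem factorial_mul_dvd_factorial {n c n' : ℕ} (hnc : n < c) (hcn' : c ≤ n') :
    n ! * c ∣ n' ! :=
  calc n ! * c ∣ (c - 1)! * c := Nat.mul_dvd_mul_right (factorial_dvd_factorial (by omega)) c
    _ = c ! := by rw [mul_comm, mul_factorial_pred (by omega)]
    _ ∣ n' ! := factorial_dvd_factorial hcn'

theorem uniformBell_ne_zero (N : ℕ) {m : ℕ} (hm : m ≠ 0) : N.uniformBell m ≠ 0 := by
  intro h
  have := uniformBell_mul_eq N hm
  rw [h, zero_mul, zero_mul] at this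
  exact factorial_ne_zero _ this.symm

theorem uniformBell_dvd_uniformBell_of_le {L N : ℕ} (m : ℕ) (h : L ≤ N) :
    L.uniformBell m ∣ N.uniformBell m := by
  induction N, h using Nat.le_induction with
  | base => rfl
  | succ N _ ih => rw [uniformBell_succ_left]; exact ih.mul_left _

end Nat

section Valuation

variable {p : ℕ} [hp : Fact p.Prime]

theorem padicValNat_factorial_add_le_of_dvd {n c n' k : ℕ} (hnc : n < c) (hcn' : c ≤ n')
    (hk : p ^ k ∣ c) : padicValNat p n ! + k ≤ padicValNat p n' ! := by
  rw [← padicValNat_dvd_iff_le (Nat.factorial_ne_zero _), pow_add]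
  exact (Nat.mul_dvd_mul pow_padicValNat_dvd hk).trans (Nat.factorial_mul_dvd_factorial hnc hcn')

theorem padicValNat_factorial_eq_add_div (n : ℕ) :
    padicValNat p n ! = padicValNat p (n / p)! + n / p := by
  rw [← padicValNat_mul_div_factorial, padicValNat_factorial_mul]

theorem padicValNat_uniformBell_add_eq (N : ℕ) {m : ℕ} (hm : m ≠ 0) :
    padicValNat p (N.uniformBell m) + N * padicValNat p m ! + padicValNat p N ! =
      padicValNat p (N * m)! := by
  have hB := Nat.uniformBell_ne_zero N hm
  have hpow : m ! ^ N ≠ 0 := pow_ne_zero _ (Nat.factorial_ne_zero m)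
  rw [← Nat.uniformBell_mul_eq N hm,
    padicValNat.mul (mul_ne_zero hB hpow) (Nat.factorial_ne_zero N), padicValNat.mul hB hpow,
    padicValNat.pow]

theorem padicValNat_factorial_add_lt_of_two_le {L a i : ℕ} (ha : 2 ≤ a) (hi : 0 < i)
    (hig : i ≤ L * a / p) : padicValNat p L ! + padicValNat p i < padicValNat p (L * a)! := by
  set q := p ^ (padicValNat p i + 1)
  have hq : q ≤ L * a :=
    calc q = p ^ padicValNat p i * p := pow_succ _ _
      _ ≤ i * p := Nat.mul_le_mul_right _ (Nat.le_of_dvd hi pow_padicValNat_dvd)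
      _ ≤ L * a / p * p := Nat.mul_le_mul_right _ hig
      _ ≤ L * a := Nat.div_mul_le_self _ _
  -- the first multiple of `q` above `L` lies in `(L, L a]`
  have hle : q * (L / q + 1) ≤ L * a := by
    rcases lt_or_ge L q with h | h
    · simpa [Nat.div_eq_of_lt h] using hq
    · have : 2 * L ≤ L * a := by nlinarith
      have := Nat.mul_div_le L q
      nlinarith
  have := padicValNat_factorial_add_le_of_dvd (Nat.lt_mul_div_succ L (pow_pos hp.out.pos _)) hle
    (Dvd.intro _ rfl)
  omega

theorem padicValNat_factorial_add_lt_of_ne_zero {L a j i : ℕ} (hap : a < p) (hj : j ≠ 0)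
    (hi : 0 < i) (hig : i ≤ L * a / p) :
    L * padicValNat p (a + p * j)! + padicValNat p L ! + padicValNat p (L * j + i) <
      padicValNat p (L * (a + p * j))! := by
  have hLm : L * (a + p * j) / p = L * j + L * a / p := by
    rw [mul_add, mul_left_comm, Nat.add_mul_div_left _ _ hp.out.pos, add_comm]
  have hm : (a + p * j) / p = j := by
    rw [Nat.add_mul_div_left _ _ hp.out.pos, Nat.div_eq_of_lt hap, zero_add]
  have h1 := padicValNat_factorial_eq_add_div (p := p) (L * (a + p * j))
  have h2 := padicValNat_factorial_eq_add_div (p := p) (a + p * j)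
  have h3 := padicValNat_factorial_add_le_of_dvd (p := p) (n := L * j) (c := L * j + i)
    (n' := L * j + L * a / p) (by omega) (by omega) pow_padicValNat_dvd
  have h4 := padicValNat_uniformBell_add_eq (p := p) L hj
  rw [hLm] at h1
  rw [hm] at h2
  rw [h1, h2, mul_add]
  omega

theorem pow_padicValNat_succ_dvd_uniformBell {L a j i : ℕ} (hap : a < p) (hm : 2 ≤ a + p * j)
    (hi : 0 < i) (hig : i ≤ L * a / p) :
    p ^ (padicValNat p (L * j + i) + 1) ∣ L.uniformBell (a + p * j) := by
  rw [padicValNat_dvd_iff_le (Nat.uniformBell_ne_zero L (by omega))]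
  have := padicValNat_uniformBell_add_eq (p := p) L (m := a + p * j) (by omega)
  suffices L * padicValNat p (a + p * j)! + padicValNat p L ! + padicValNat p (L * j + i) <
      padicValNat p (L * (a + p * j))! by omega
  rcases eq_or_ne j 0 with rfl | hj
  · have : padicValNat p a ! = 0 := by
      rw [padicValNat_factorial_eq_add_div, Nat.div_eq_of_lt hap]; simp
    simpa [this] using padicValNat_factorial_add_lt_of_two_le (by omega) hi hig
  · exact padicValNat_factorial_add_lt_of_ne_zero hap hj hi hig

end Valuation

theorem harm_add_sub_harm (n g : ℕ) :
    harm (n + g) - harm n = ∑ i ∈ range g, 1 / ((n + (i + 1) : ℕ) : ℚ) := by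
  simp only [harm, sum_range_add, add_sub_cancel_left, Nat.cast_add, Nat.cast_one, add_assoc]

theorem BQ_eq_factorial_mul_uniformBell (N : ℕ) {m : ℕ} (hm : m ≠ 0) :
    BQ N m = N ! * N.uniformBell m := by
  rw [BQ, ← Nat.uniformBell_mul_eq N hm]
  have : (m ! : ℚ) ^ N ≠ 0 := pow_ne_zero _ (mod_cast Nat.factorial_ne_zero m)
  push_cast
  field_simp

theorem BQvec_eq_prod_factorial_mul_prod_uniformBell {k : ℕ} (N : Fin k → ℕ) {m : ℕ}
    (hm : m ≠ 0) :
    BQvec N m = (∏ i, ((N i)! : ℚ)) * ((∏ i, (N i).uniformBell m : ℕ) : ℚ) := by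
  simp only [BQvec, BQ_eq_factorial_mul_uniformBell _ hm, prod_mul_distrib, Nat.cast_prod]

namespace Padic

variable {p : ℕ} [hp : Fact p.Prime]

theorem one_le_norm_inv_natCast {n : ℕ} (hn : n ≠ 0) : 1 ≤ ‖(n : ℚ_[p])⁻¹‖ := by
  rw [norm_inv]
  exact one_le_inv₀ (norm_pos_iff.2 (mod_cast hn)) |>.2 (mod_cast norm_int_le_one (p := p) n)

theorem norm_ratCast_le_norm_inv_den (q : ℚ) : ‖(q : ℚ_[p])‖ ≤ ‖(q.den : ℚ_[p])⁻¹‖ := by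
  conv_lhs => rw [← Rat.num_div_den q]
  push_cast
  rw [div_eq_mul_inv, norm_mul]
  exact mul_le_of_le_one_left (norm_nonneg _) (norm_int_le_one _)

theorem norm_natCast_div_le_norm_p {u n : ℕ} (hn : n ≠ 0)
    (hdvd : p ^ (padicValNat p n + 1) ∣ u) : ‖(u / n : ℚ_[p])‖ ≤ ‖(p : ℚ_[p])‖ := by
  have hu : ‖(u : ℚ_[p])‖ ≤ (p : ℝ) ^ (-(padicValNat p n + 1 : ℕ) : ℤ) := by
    simpa using (norm_int_le_pow_iff_dvd (p := p) u (padicValNat p n + 1)).2 (mod_cast hdvd)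
  have hn' : ‖(n : ℚ_[p])‖ = (p : ℝ) ^ (-(padicValNat p n : ℤ)) := by
    rw [norm_eq_zpow_neg_valuation (mod_cast hn), valuation_natCast]
  have hp0 : (0 : ℝ) < p := mod_cast hp.out.pos
  rw [norm_div, hn', norm_p, div_le_iff₀ (by positivity), ← zpow_neg_one, ← zpow_add₀ hp0.ne']
  refine hu.trans_eq (congrArg _ ?_)
  push_cast
  ring

theorem norm_mul_harm_sub_harm_div_le (n : ℕ) :
    ‖(p * harm n - harm (n / p) : ℚ_[p])‖ ≤ ‖(p : ℚ_[p])‖ := by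
  induction n with
  | zero => simp [harm]
  | succ n ih =>
    have harm_succ : ∀ k : ℕ, (harm (k + 1) : ℚ_[p]) = harm k + ((k + 1 : ℕ) : ℚ_[p])⁻¹ := by
      intro k
      simp [harm, sum_range_succ]
    by_cases hdvd : p ∣ n + 1
    · -- the new term `p / (n + 1)` of `p H_{n+1}` is the new term of `H_{(n+1)/p}`
      have hq : ((n / p + 1 : ℕ) : ℚ_[p]) * p = (n + 1 : ℕ) := by
        rw [← Nat.succ_div_of_dvd hdvd, ← Nat.cast_mul, Nat.div_mul_cancel hdvd]
      have hp0 : (p : ℚ_[p]) ≠ 0 := mod_cast hp.out.ne_zero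
      have hq0 : ((n / p + 1 : ℕ) : ℚ_[p]) ≠ 0 := mod_cast Nat.succ_ne_zero (n / p)
      rw [Nat.succ_div_of_dvd hdvd, harm_succ, harm_succ, ← hq]
      convert ih using 2
      field_simp
      ring
    · have hunit : ‖((n + 1 : ℕ) : ℚ_[p])‖ = 1 :=
        norm_natCast_eq_one_iff.2 ((Nat.Prime.coprime_iff_not_dvd hp.out).2 hdvd)
      rw [Nat.succ_div_of_not_dvd hdvd, harm_succ]
      calc _ = ‖(p * harm n - harm (n / p) : ℚ_[p]) + p * ((n + 1 : ℕ) : ℚ_[p])⁻¹‖ := by ring_nf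
        _ ≤ _ := (IsUltrametricDist.norm_add_le_max _ _).trans <|
          max_le ih (by rw [norm_mul, norm_inv, hunit, inv_one, mul_one])

theorem norm_harm_div_le (n : ℕ) :
    ‖(harm (n / p) : ℚ_[p])‖ ≤ ‖(p / (harm n).den : ℚ_[p])‖ := by
  have hden := one_le_norm_inv_natCast (p := p) (harm n).den_nz
  rw [div_eq_mul_inv, norm_mul]
  calc ‖(harm (n / p) : ℚ_[p])‖ = ‖p * harm n + (harm (n / p) - p * harm n : ℚ_[p])‖ := by
        rw [add_sub_cancel]
    _ ≤ max ‖(p * harm n : ℚ_[p])‖ ‖(p * harm n - harm (n / p) : ℚ_[p])‖ :=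
        (IsUltrametricDist.norm_add_le_max _ _).trans_eq (by rw [norm_sub_rev])
    _ ≤ _ := max_le (by rw [norm_mul]; gcongr; exact norm_ratCast_le_norm_inv_den _)
        ((norm_mul_harm_sub_harm_div_le n).trans (le_mul_of_one_le_right (norm_nonneg _) hden))

theorem norm_mul_harm_sub_le {L a j U : ℕ} (hap : a < p) (hm : 2 ≤ a + p * j)
    (hU : L.uniformBell (a + p * j) ∣ U) :
    ‖(((U : ℚ) * (harm (L * j + L * a / p) - harm (L * j)) : ℚ) : ℚ_[p])‖ ≤ ‖(p : ℚ_[p])‖ := by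
  rw [harm_add_sub_harm, mul_sum]
  simp only [Rat.cast_sum, Rat.cast_mul, Rat.cast_div, Rat.cast_one, Rat.cast_natCast]
  refine IsUltrametricDist.norm_sum_le_of_forall_le_of_nonneg (norm_nonneg _) fun i hi => ?_
  rw [← div_eq_mul_one_div]
  exact norm_natCast_div_le_norm_p (by omega) <|
    (pow_padicValNat_succ_dvd_uniformBell hap hm i.succ_pos (mem_range.1 hi)).trans hU

end Padic

theorem BQvec_mul_harm_diff_mem_p_M_theta_zp_general (p : ℕ) [hp : Fact p.Prime] (a j : ℕ)
    (ha : a < p) {k : ℕ} (N : Fin k → ℕ)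
    (L : ℕ) (hL2 : L ≤ Finset.univ.sup N) :
    ‖((BQvec N (a + p * j) * (harm (L * j + L * a / p) - harm (L * j)) : ℚ) : ℚ_[p])‖
      ≤ ‖(((p : ℚ) * (∏ i, ((N i).factorial : ℚ)) / (Theta L : ℚ) : ℚ) : ℚ_[p])‖ := by
  rcases Nat.eq_zero_or_pos (L * a / p) with hg | hg
  · simp only [hg, add_zero, sub_self, mul_zero, Rat.cast_zero, norm_zero]
    exact norm_nonneg _
  have ha0 : a ≠ 0 := by rintro rfl; simp at hg
  have hL0 : L ≠ 0 := by rintro rfl; simp at hg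
  obtain ⟨t, -, hLt⟩ := (Finset.le_sup_iff (Nat.pos_of_ne_zero hL0)).1 hL2
  rw [BQvec_eq_prod_factorial_mul_prod_uniformBell N (by omega), mul_assoc, mul_comm (p : ℚ),
    mul_div_assoc]
  simp only [Rat.cast_mul (∏ i, ((N i)! : ℚ)), norm_mul]
  refine mul_le_mul_of_nonneg_left ?_ (norm_nonneg (_ : ℚ_[p]))
  rcases eq_or_ne (a + p * j) 1 with hm | hm
  · obtain ⟨rfl, rfl⟩ : a = 1 ∧ j = 0 := by
      have : p * j = 0 := by omega
      simp only [mul_eq_zero, hp.out.ne_zero, false_or] at this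
      omega
    simpa [Nat.uniformBell_one_right, harm, Theta] using Padic.norm_harm_div_le (p := p) L
  have hdvd : L.uniformBell (a + p * j) ∣ ∏ i, (N i).uniformBell (a + p * j) :=
    (Nat.uniformBell_dvd_uniformBell_of_le _ hLt).trans (dvd_prod_of_mem _ (mem_univ t))
  calc _ ≤ ‖(p : ℚ_[p])‖ := Padic.norm_mul_harm_sub_le ha (by omega) hdvd
    _ ≤ _ := by
        rw [Rat.cast_div, div_eq_mul_inv, norm_mul]
        push_cast
        exact le_mul_of_one_le_right (norm_nonneg _) (Padic.one_le_norm_inv_natCast (harm L).den_nz)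

/-- Lemma 4 (Krattenthaler–Rivoal): for a prime `p`, `0 ≤ a < p`, `j ≥ 0`, positive
integers `N_1, …, N_k`, `M_𝐍 = ∏_i N_i!` and `1 ≤ L ≤ max(N_1, …, N_k)`, one has
`B_𝐍(a+pj)·(H_{Lj+⌊La/p⌋} − H_{Lj}) ∈ p·(M_𝐍/Θ_L)·ℤ_p`. -/
theorem BQvec_mul_harm_diff_mem_p_M_theta_zp (p : ℕ) [hp : Fact p.Prime] (a j : ℕ)
    (ha : a < p) {k : ℕ} (N : Fin k → ℕ) (hN : ∀ i, 0 < N i)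
    (L : ℕ) (hL1 : 1 ≤ L) (hL2 : L ≤ Finset.univ.sup N) :
    ‖((BQvec N (a + p * j) * (harm (L * j + L * a / p) - harm (L * j)) : ℚ) : ℚ_[p])‖
      ≤ ‖(((p : ℚ) * (∏ i, ((N i).factorial : ℚ)) / (Theta L : ℚ) : ℚ) : ℚ_[p])‖ :=
  BQvec_mul_harm_diff_mem_p_M_theta_zp_general p (hp := hp) a j ha N L hL2
end

section
/- For any prime p, any positive integers N_1, …, N_k, and any non-negative integers m, r, w with 0 ≤ w < p^r, the p-adic valuation of 𝐁_𝐍(w + m·p^r) is at least the p-adic valuation of 𝐁_𝐍(m), i.e., 𝐁_𝐍(w + m p^r)/𝐁_𝐍(m) ∈ ℤ_p. -/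
open Finset

/-!
By Legendre's formula, `v_p(𝐁_N(n)) = ∑_{i ≥ 1} Δ_N(⌊N n / p^i⌋)`, where `Δ_N` is Landau's
function of `𝐁_N` read at `M / N`. Inclusion–exclusion over the prime factors of `N` shows that
`Δ_N(M)` counts the integers in `(0, M mod N]` prime to `N`; so it is nonnegative, and monotone
in `M` while `⌊M / N⌋` stays fixed. For `n = w + m p^r` we have `⌊N m / p^i⌋ ≤ ⌊N n / p^(i+r)⌋`,
and both have the quotient `⌊m / p^i⌋` by `N`; hence the `(i + r)`-th term for `n` dominates the
`i`-th term for `m`.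
-/

def sieveCount (S : Finset ℕ) (t : ℕ) : ℕ := #{a ∈ Ioc 0 t | ∀ q ∈ S, ¬ q ∣ a}

lemma sieveCount_mono (S : Finset ℕ) : Monotone (sieveCount S) := fun _ _ h =>
  card_le_card (filter_subset_filter _ (Ioc_subset_Ioc_right h))

lemma sieveCount_insert {q : ℕ} {S : Finset ℕ} (hq : q.Prime) (hS : ∀ p ∈ S, p.Prime)
    (hqS : q ∉ S) (t : ℕ) :
    sieveCount S t = sieveCount (insert q S) t + sieveCount S (t / q) := by
  unfold sieveCount
  rw [← card_filter_add_card_filter_not (p := fun a => ¬ q ∣ a), filter_filter, filter_filter]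
  congr 1
  · congr 1
    ext a
    simp only [mem_filter, forall_mem_insert]
    tauto
  · apply card_nbij' (· / q) (· * q)
    · intro a ha
      simp only [coe_filter, mem_Ioc, not_not, Set.mem_ofPred_eq] at ha ⊢
      obtain ⟨⟨ha0, hat⟩, hS_a, hqa⟩ := ha
      exact ⟨⟨Nat.div_pos (Nat.le_of_dvd ha0 hqa) hq.pos, Nat.div_le_div_right hat⟩,
        fun p hp hpa => hS_a p hp (hpa.trans (Nat.div_dvd_of_dvd hqa))⟩
    · intro b hb
      simp only [coe_filter, mem_Ioc, not_not, Set.mem_ofPred_eq] at hb ⊢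
      obtain ⟨⟨hb0, hbt⟩, hS_b⟩ := hb
      refine ⟨⟨Nat.mul_pos hb0 hq.pos, Nat.mul_le_of_le_div q b t hbt⟩, ?_, dvd_mul_left q b⟩
      intro p hp hpbq
      rcases (hS p hp).dvd_mul.1 hpbq with hpb | hpq
      · exact hS_b p hp hpb
      · exact hqS ((Nat.prime_dvd_prime_iff_eq (hS p hp) hq).1 hpq ▸ hp)
    · intro a ha
      simp only [coe_filter, not_not, Set.mem_ofPred_eq] at ha
      exact Nat.div_mul_cancel ha.2.2
    · intro b _
      exact Nat.mul_div_cancel b hq.pos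

lemma sieveCount_eq_sum_powerset (S : Finset ℕ) (hS : ∀ p ∈ S, p.Prime) (t : ℕ) :
    (sieveCount S t : ℤ) = ∑ J ∈ S.powerset, (-1) ^ #J * ((t / ∏ p ∈ J, p : ℕ) : ℤ) := by
  induction S using Finset.induction_on generalizing t with
  | empty => simp [sieveCount]
  | @insert q S hqS ih =>
    have hq : q.Prime := hS q (mem_insert_self q S)
    have hS' : ∀ p ∈ S, p.Prime := fun p hp => hS p (mem_insert_of_mem hp)
    have hinsert : ∀ J ∈ S.powerset, (-1 : ℤ) ^ #(insert q J) * (t / ∏ p ∈ insert q J, p : ℕ)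
        = -((-1) ^ #J * (t / q / ∏ p ∈ J, p : ℕ)) := by
      intro J hJ
      have hqJ : q ∉ J := fun h => hqS (mem_powerset.1 hJ h)
      rw [card_insert_of_notMem hqJ, prod_insert hqJ, Nat.div_div_eq_div_mul, pow_succ]
      ring
    rw [sum_powerset_insert hqS, sum_congr rfl hinsert, sum_neg_distrib, ← ih hS', ← ih hS',
      sieveCount_insert hq hS' hqS t]
    push_cast
    ring

lemma sieveCount_primeFactors_self (N : ℕ) : sieveCount N.primeFactors N = N.totient := by
  rcases N.eq_zero_or_pos with rfl | hN
  · simp [sieveCount]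
  rw [← Nat.filter_coprime_Ico_eq_totient N 1, sieveCount,
    show Ioc 0 N = Ico 1 (1 + N) by ext; simp; omega]
  refine congrArg card (filter_congr fun a _ => ⟨fun h => ?_, fun h q hq => ?_⟩)
  · exact Nat.coprime_of_dvd fun q hq hqN => h q (Nat.mem_primeFactors.2 ⟨hq, hqN, hN.ne'⟩)
  · exact (Nat.prime_of_mem_primeFactors hq).coprime_iff_not_dvd.1
      (h.coprime_dvd_left (Nat.dvd_of_mem_primeFactors hq))

lemma prod_dvd_of_subset_primeFactors {J : Finset ℕ} {N : ℕ} (hJ : J ⊆ N.primeFactors) :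
    ∏ p ∈ J, p ∣ N :=
  (prod_dvd_prod_of_subset _ _ _ hJ).trans (Nat.prod_primeFactors_dvd N)

lemma sum_evenSub_sub_sum_oddSub (N : ℕ) (f : Finset ℕ → ℤ) :
    ∑ J ∈ evenSub N, f J - ∑ J ∈ oddSub N, f J
      = ∑ J ∈ N.primeFactors.powerset, (-1) ^ #J * f J := by
  rw [← sum_filter_add_sum_filter_not N.primeFactors.powerset (fun J => Even #J),
    sub_eq_add_neg, ← sum_neg_distrib]
  simp only [Nat.not_even_iff_odd]
  congr 1 <;> refine sum_congr rfl fun J hJ => ?_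
  · rw [(mem_filter.1 hJ).2.neg_one_pow, one_mul]
  · rw [(mem_filter.1 hJ).2.neg_one_pow, neg_one_mul]

/-- Landau's function `Δ_N(x) = ∑ ⌊α_j x⌋ - ∑ ⌊β_j x⌋` of `𝐁_N` at `x = M / N`: there
`⌊α_j x⌋ = ⌊M / ∏ J⌋`, and each of the `φ(N)` padding entries contributes `⌊M / N⌋`. -/
def landauDelta (N M : ℕ) : ℤ :=
  ∑ J ∈ evenSub N, ((M / ∏ p ∈ J, p : ℕ) : ℤ) - ∑ J ∈ oddSub N, ((M / ∏ p ∈ J, p : ℕ) : ℤ)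
    - N.totient * ((M / N : ℕ) : ℤ)

lemma div_eq_mod_div_add_div_mul_div {M N d : ℕ} (hdN : d ∣ N) (hd : 0 < d) :
    M / d = M % N / d + N / d * (M / N) := by
  obtain ⟨c, rfl⟩ := hdN
  rw [Nat.mul_div_cancel_left c hd]
  conv_lhs => rw [← Nat.mod_add_div M (d * c), mul_assoc, Nat.add_mul_div_left _ _ hd]

lemma landauDelta_eq_sieveCount (N M : ℕ) :
    landauDelta N M = sieveCount N.primeFactors (M % N) := by
  have hprimes : ∀ p ∈ N.primeFactors, p.Prime := fun p => Nat.prime_of_mem_primeFactors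
  have hdecomp : ∀ J ∈ N.primeFactors.powerset,
      M / ∏ p ∈ J, p = M % N / (∏ p ∈ J, p) + N / (∏ p ∈ J, p) * (M / N) := fun J hJ =>
    div_eq_mod_div_add_div_mul_div (prod_dvd_of_subset_primeFactors (mem_powerset.1 hJ))
      (prod_pos fun p hp => (hprimes p (mem_powerset.1 hJ hp)).pos)
  have htot := sieveCount_eq_sum_powerset _ hprimes N
  rw [sieveCount_primeFactors_self] at htot
  rw [landauDelta, sum_evenSub_sub_sum_oddSub N fun J => ((M / ∏ p ∈ J, p : ℕ) : ℤ),
    sum_congr rfl fun J hJ => by rw [hdecomp J hJ], sieveCount_eq_sum_powerset _ hprimes]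
  simp only [Nat.cast_add, Nat.cast_mul, mul_add, sum_add_distrib, ← mul_assoc, ← sum_mul, ← htot]
  ring

lemma landauDelta_nonneg (N M : ℕ) : 0 ≤ landauDelta N M := by
  rw [landauDelta_eq_sieveCount]
  positivity

lemma landauDelta_le_of_div_eq {N M M' : ℕ} (hle : M ≤ M') (hdiv : M / N = M' / N) :
    landauDelta N M ≤ landauDelta N M' := by
  rw [landauDelta_eq_sieveCount, landauDelta_eq_sieveCount, Nat.cast_le]
  apply sieveCount_mono
  have := Nat.div_add_mod M N
  have := Nat.div_add_mod M' N
  rw [hdiv] at *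
  linarith

lemma padicValNat_prod {ι : Type*} (p : ℕ) [hp : Fact p.Prime] {s : Finset ι} {f : ι → ℕ}
    (hf : ∀ i ∈ s, f i ≠ 0) : padicValNat p (∏ i ∈ s, f i) = ∑ i ∈ s, padicValNat p (f i) := by
  simp only [← Nat.factorization_def _ hp.out, Nat.factorization_prod hf, Finsupp.coe_finsetSum,
    Finset.sum_apply]

lemma padicValNat_factorial_div_mul (p : ℕ) [Fact p.Prime] {N d : ℕ} (hdN : d ∣ N) (n : ℕ)
    {b : ℕ} (hb : Nat.log p (N * n) < b) :
    padicValNat p (N / d * n).factorial = ∑ i ∈ Ico 1 b, N * n / p ^ i / d := by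
  rw [Nat.div_mul_right_comm hdN,
    padicValNat_factorial ((Nat.log_mono_right (Nat.div_le_self _ _)).trans_lt hb)]
  refine sum_congr rfl fun i _ => ?_
  rw [Nat.div_div_eq_div_mul, Nat.div_div_eq_div_mul, mul_comm d]

lemma Bnum_pos (N m : ℕ) : 0 < Bnum N m := by
  unfold Bnum
  positivity

lemma Bden_pos (N m : ℕ) : 0 < Bden N m := by
  unfold Bden
  positivity

lemma BB_pos (N m : ℕ) : 0 < BB N m := by
  unfold BB
  have := Bnum_pos N m
  have := Bden_pos N m
  positivity

lemma padicValRat_BB (p : ℕ) [Fact p.Prime] (N n : ℕ) {b : ℕ} (hb : Nat.log p (N * n) < b) :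
    padicValRat p (BB N n) = ∑ i ∈ Ico 1 b, landauDelta N (N * n / p ^ i) := by
  rcases N.eq_zero_or_pos with rfl | hN
  · simp [BB, Bnum, Bden, landauDelta, evenSub, oddSub]
  have hfact : ∀ J ∈ N.primeFactors.powerset, padicValNat p ((N / ∏ q ∈ J, q) * n).factorial
      = ∑ i ∈ Ico 1 b, N * n / p ^ i / ∏ q ∈ J, q := fun J hJ =>
    padicValNat_factorial_div_mul p (prod_dvd_of_subset_primeFactors (mem_powerset.1 hJ)) n hb
  have hnum : padicValNat p (Bnum N n)
      = ∑ J ∈ evenSub N, ∑ i ∈ Ico 1 b, N * n / p ^ i / ∏ q ∈ J, q := by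
    rw [Bnum, padicValNat_prod p fun J _ => Nat.factorial_ne_zero _]
    exact sum_congr rfl fun J hJ => hfact J (mem_filter.1 hJ).1
  have hden : padicValNat p (Bden N n)
      = ∑ J ∈ oddSub N, ∑ i ∈ Ico 1 b, N * n / p ^ i / ∏ q ∈ J, q
        + N.totient * ∑ i ∈ Ico 1 b, N * n / p ^ i / N := by
    rw [Bden, padicValNat.mul (prod_ne_zero_iff.2 fun J _ => Nat.factorial_ne_zero _)
      (pow_ne_zero _ (Nat.factorial_ne_zero _)), padicValNat.pow,
      padicValNat_prod p fun J _ => Nat.factorial_ne_zero _,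
      ← padicValNat_factorial_div_mul p dvd_rfl n hb, Nat.div_self hN, one_mul]
    exact congrArg (· + _) (sum_congr rfl fun J hJ => hfact J (mem_filter.1 hJ).1)
  rw [BB, padicValRat.div (by exact_mod_cast (Bnum_pos N n).ne')
      (by exact_mod_cast (Bden_pos N n).ne'), padicValRat.of_nat, padicValRat.of_nat, hnum, hden,
    sum_comm, sum_comm (s := oddSub N)]
  simp only [landauDelta, Nat.cast_add, Nat.cast_mul, Nat.cast_sum, mul_sum, sum_sub_distrib]
  ring

lemma mul_div_pow_le_mul_div_pow_add {p : ℕ} (hp : 0 < p) (N m w r i : ℕ) :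
    N * m / p ^ i ≤ N * (w + m * p ^ r) / p ^ (i + r) := by
  rw [pow_add, mul_comm (p ^ i), ← Nat.div_div_eq_div_mul]
  refine Nat.div_le_div_right ((Nat.le_div_iff_mul_le (pow_pos hp r)).2 ?_)
  rw [mul_assoc]
  exact Nat.mul_le_mul_left N (Nat.le_add_left _ _)

lemma mul_div_pow_div_eq_mul_div_pow_add_div {p r w : ℕ} (hp : 0 < p) (hw : w < p ^ r)
    (N m i : ℕ) : N * m / p ^ i / N = N * (w + m * p ^ r) / p ^ (i + r) / N := by
  rcases N.eq_zero_or_pos with rfl | hN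
  · simp
  have hcancel : ∀ x q, N * x / q / N = x / q := fun x q => by
    rw [Nat.div_div_eq_div_mul, mul_comm q, ← Nat.div_div_eq_div_mul, Nat.mul_div_cancel_left _ hN]
  rw [hcancel, hcancel, pow_add, mul_comm (p ^ i), ← Nat.div_div_eq_div_mul,
    Nat.add_mul_div_right _ _ (pow_pos hp r), Nat.div_eq_of_lt hw, zero_add]

lemma padicValRat_BB_le (p : ℕ) [hp : Fact p.Prime] (N m : ℕ) {r w : ℕ} (hw : w < p ^ r) :
    padicValRat p (BB N m) ≤ padicValRat p (BB N (w + m * p ^ r)) := by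
  have hp0 := hp.out.pos
  set b := Nat.log p (N * (w + m * p ^ r)) + 1 with hb
  have hmn : m ≤ w + m * p ^ r :=
    (Nat.le_mul_of_pos_right m (pow_pos hp0 r)).trans (Nat.le_add_left _ _)
  have hbm : Nat.log p (N * m) < b :=
    Nat.lt_succ_of_le (Nat.log_mono_right (Nat.mul_le_mul_left N hmn))
  rw [padicValRat_BB p N m hbm, padicValRat_BB p N _ (b := b + r) (by omega),
    ← Ico_union_Ico_eq_Ico (b := 1 + r) (c := b + r) (by omega) (by omega),
    sum_union (Ico_disjoint_Ico_consecutive _ _ _), ← sum_Ico_add']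
  calc ∑ i ∈ Ico 1 b, landauDelta N (N * m / p ^ i)
      ≤ ∑ i ∈ Ico 1 b, landauDelta N (N * (w + m * p ^ r) / p ^ (i + r)) :=
        sum_le_sum fun i _ => landauDelta_le_of_div_eq
          (mul_div_pow_le_mul_div_pow_add hp0 N m w r i)
          (mul_div_pow_div_eq_mul_div_pow_add_div hp0 hw N m i)
    _ ≤ _ := le_add_of_nonneg_left (sum_nonneg fun _ _ => landauDelta_nonneg _ _)

lemma norm_BB_div_BB_le_one (p : ℕ) [Fact p.Prime] (N m : ℕ) {r w : ℕ} (hw : w < p ^ r) :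
    ‖((BB N (w + m * p ^ r) / BB N m : ℚ) : ℚ_[p])‖ ≤ 1 := by
  rw [Padic.norm_le_one_iff_val_nonneg, Padic.valuation_ratCast,
    padicValRat.div (BB_pos _ _).ne' (BB_pos _ _).ne', sub_nonneg]
  exact padicValRat_BB_le p N m hw

theorem BBvec_div_BBvec_mem_zp_general (p : ℕ) [hp : Fact p.Prime]
    {k : ℕ} (N : Fin k → ℕ)
    (m r w : ℕ) (hw : w < p ^ r) :
    ‖((BBvec N (w + m * p ^ r) / BBvec N m : ℚ) : ℚ_[p])‖ ≤ 1 := by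
  rw [BBvec, BBvec, ← prod_div_distrib, Rat.cast_prod, norm_prod]
  exact prod_le_one (fun _ _ => norm_nonneg _) fun i _ => norm_BB_div_BB_le_one p (N i) m hw

/-- Lemma (Krattenthaler–Rivoal): for a prime `p`, positive integers `N_1, …, N_k`, and
`0 ≤ w < p^r`, one has `v_p(𝐁_𝐍(w + mp^r)) ≥ v_p(𝐁_𝐍(m))`, i.e.
`𝐁_𝐍(w + mp^r)/𝐁_𝐍(m) ∈ ℤ_p`. -/
theorem BBvec_div_BBvec_mem_zp (p : ℕ) [hp : Fact p.Prime]
    {k : ℕ} (N : Fin k → ℕ) (hN : ∀ i, 0 < N i)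
    (m r w : ℕ) (hw : w < p ^ r) :
    ‖((BBvec N (w + m * p ^ r) / BBvec N m : ℚ) : ℚ_[p])‖ ≤ 1 :=
  BBvec_div_BBvec_mem_zp_general p (hp := hp) N m r w hw
end
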